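/- arXiv:0812.4113 — 2 statements merged into one kernel-verified Lean document; each statement's English description precedes it below -/
import Mathlib

section
/- If T = (Λ_1,…,Λ_n) is an updown λ-tableau and λ is a partition of n, then all exponents p_1,…,p_n of T are equal to zero, and f(T) equals the product of the hook lengths of all boxes of λ. -/
/-!
Common definitions for the fusion procedure for the Brauer algebra
(Isaev–Molev, "Fusion procedure for the Brauer algebra").
-/

noncomputable section
open scoped BigOperators
open Classical

namespace BrauerFusion

/-- The base field `F = ℂ(ω)`. -/
abbrev F : Type := RatFunc ℂ

/-- The indeterminate `ω ∈ ℂ(ω)`. -/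
def ωF : F := RatFunc.X

/-- `s e : ℕ → A` satisfy the defining relations of the Brauer algebra `B_n(ω)`
over the commutative base `R`; here `s i`, `e i` represent the generators
`s_i`, `e_i` for `1 ≤ i ≤ n - 1` (values at other indices are irrelevant). -/
structure IsBrauer {R : Type*} {A : Type*} [CommRing R] [Ring A] [Algebra R A]
    (n : ℕ) (ω : R) (s e : ℕ → A) : Prop where
  ss : ∀ i, 1 ≤ i → i + 1 ≤ n → s i * s i = 1
  ee : ∀ i, 1 ≤ i → i + 1 ≤ n → e i * e i = ω • e i
  se : ∀ i, 1 ≤ i → i + 1 ≤ n → s i * e i = e i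
  es : ∀ i, 1 ≤ i → i + 1 ≤ n → e i * s i = e i
  ss_comm : ∀ i j, 1 ≤ i → j + 1 ≤ n → i + 1 < j → s i * s j = s j * s i
  ee_comm : ∀ i j, 1 ≤ i → j + 1 ≤ n → i + 1 < j → e i * e j = e j * e i
  se_comm : ∀ i j, 1 ≤ i → j + 1 ≤ n → i + 1 < j → s i * e j = e j * s i
  es_comm : ∀ i j, 1 ≤ i → j + 1 ≤ n → i + 1 < j → s j * e i = e i * s j
  braid : ∀ i, 1 ≤ i → i + 2 ≤ n → s i * s (i+1) * s i = s (i+1) * s i * s (i+1)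
  eee₁ : ∀ i, 1 ≤ i → i + 2 ≤ n → e i * e (i+1) * e i = e i
  eee₂ : ∀ i, 1 ≤ i → i + 2 ≤ n → e (i+1) * e i * e (i+1) = e (i+1)
  see : ∀ i, 1 ≤ i → i + 2 ≤ n → s i * e (i+1) * e i = s (i+1) * e i
  ees : ∀ i, 1 ≤ i → i + 2 ≤ n → e (i+1) * e i * s (i+1) = e (i+1) * s i

variable {A : Type*} [Ring A]

/-- The transposition `s_{ij} = s_i s_{i+1} ⋯ s_{j-2} s_{j-1} s_{j-2} ⋯ s_{i+1} s_i`
(for `i < j`), defined by `s_{i,i+1} = s_i` and `s_{ij} = s_i s_{i+1,j} s_i`. -/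
def sij (s : ℕ → A) (i j : ℕ) : A :=
  if h : i + 1 < j then s i * sij s (i+1) j * s i else s i
termination_by j - i
decreasing_by omega

/-- The element `e_{ij} = s_{i,j-1} e_{j-1} s_{i,j-1}` (for `i < j`), with `e_{i,i+1} = e_i`. -/
def eij (s e : ℕ → A) (i j : ℕ) : A :=
  if i + 1 < j then sij s i (j-1) * e (j-1) * sij s i (j-1) else e i

/-- `x_j^{(m)} = (ω-1)/2 + ∑_{r=1}^{j-1} (s_{rm} - e_{rm})`. -/
def jmM {R : Type*} [Field R] [Algebra R A] (ω : R) (s e : ℕ → A) (j m : ℕ) : A :=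
  algebraMap R A ((ω - 1) / 2) + ∑ r ∈ Finset.Icc 1 (j-1), (sij s r m - eij s e r m)

/-- The Jucys–Murphy element `x_r = (ω-1)/2 + ∑_{k=1}^{r-1} (s_{kr} - e_{kr})`. -/
def jm {R : Type*} [Field R] [Algebra R A] (ω : R) (s e : ℕ → A) (r : ℕ) : A :=
  jmM ω s e r r

/-- The pairs `(i, j)` with `1 ≤ i < j ≤ n` in lexicographic order. -/
def lexPairs (n : ℕ) : List (ℕ × ℕ) :=
  (List.range' 1 n).flatMap fun i =>
    ((List.range' 1 n).filter fun j => decide (i < j)).map fun j => (i, j)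

/-- The rational function
`Ψ(u_1,…,u_n) = ∏_{1≤i<j≤n} (1 - e_{ij}/(u_i+u_j)) ∏_{1≤i<j≤n} (1 - s_{ij}/(u_i-u_j))`,
with ordered products over the pairs `(i,j)` in lexicographic order. -/
def Psi {K : Type*} [Field K] [Algebra K A] (s e : ℕ → A) (n : ℕ) (u : ℕ → K) : A :=
  ((lexPairs n).map fun p => 1 - (u p.1 + u p.2)⁻¹ • eij s e p.1 p.2).prod *
  ((lexPairs n).map fun p => 1 - (u p.1 - u p.2)⁻¹ • sij s p.1 p.2).prod

/-- An updown tableau of length `n`: a sequence of Young diagrams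
`Λ_0 = ∅, Λ_1, …, Λ_n` in which `Λ_r` is obtained from `Λ_{r-1}` by adding
(`add r = true`) or removing (`add r = false`) the box `box r`. -/
structure UpDownTableau (n : ℕ) where
  shape : ℕ → YoungDiagram
  box : ℕ → ℕ × ℕ
  add : ℕ → Bool
  shape_zero : shape 0 = ⊥
  step_add : ∀ r, 1 ≤ r → r ≤ n → add r = true →
    box r ∉ shape (r-1) ∧ (shape r).cells = insert (box r) (shape (r-1)).cells
  step_rem : ∀ r, 1 ≤ r → r ≤ n → add r = false →
    box r ∉ shape r ∧ (shape (r-1)).cells = insert (box r) (shape r).cells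

/-- The content `c_r` of an updown tableau: `(ω-1)/2 + j - i` if the box `(i,j)` was
added at step `r`, and `-((ω-1)/2 + j - i)` if it was removed. -/
def content {R : Type*} [Field R] (ω : R) {n : ℕ} (T : UpDownTableau n) (r : ℕ) : R :=
  if T.add r then (ω - 1) / 2 + ((T.box r).2 : R) - ((T.box r).1 : R)
  else -((ω - 1) / 2 + ((T.box r).2 : R) - ((T.box r).1 : R))

/-- The content attached to a box `b` which can be removed from (`b ∈ μ`) or
added to (`b ∉ μ`) the diagram `μ`. -/
def boxContent {R : Type*} [Field R] (ω : R) (μ : YoungDiagram) (b : ℕ × ℕ) : R :=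
  if b ∈ μ then -((ω - 1) / 2 + (b.2 : R) - (b.1 : R))
  else (ω - 1) / 2 + (b.2 : R) - (b.1 : R)

/-- All boxes `(i,j)` with `i, j < N`, listed in lexicographic order. -/
def gridList (N : ℕ) : List (ℕ × ℕ) :=
  (List.range N).flatMap fun i => (List.range N).map fun j => (i, j)

/-- A box which can be added to, or removed from, the Young diagram `μ`
so that the result is again a Young diagram. -/
def isCandidate (μ : YoungDiagram) (b : ℕ × ℕ) : Prop :=
  (b ∉ μ ∧ ∃ ν : YoungDiagram, ν.cells = insert b μ.cells) ∨
  (b ∈ μ ∧ ∃ ν : YoungDiagram, μ.cells = insert b ν.cells)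

/-- The list of all boxes which can be added to or removed from `μ`. -/
def candList (μ : YoungDiagram) : List (ℕ × ℕ) :=
  (gridList (μ.card + 2)).filter fun b => decide (isCandidate μ b)

/-- The primitive idempotent `E_{(Λ_1,…,Λ_r)}`, defined recursively by `E = 1` for `r = 0`
and `E_T = E_U ∏_a (x_r - a)/(c_r - a)`, the product over the contents `a` of all boxes
(other than the box of step `r`) which can be added to or removed from `Λ_{r-1}`. -/
def idem {R : Type*} [Field R] [Algebra R A] (ω : R) (s e : ℕ → A) {n : ℕ}
    (T : UpDownTableau n) : ℕ → A
  | 0 => 1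
  | r + 1 =>
    idem ω s e T r *
      (((candList (T.shape r)).filter (fun b => decide (b ≠ T.box (r+1)))).map fun b =>
        (content ω T (r+1) - boxContent ω (T.shape r) b)⁻¹ •
          (jm ω s e (r+1) - algebraMap R A (boxContent ω (T.shape r) b))).prod

/-- `d_k` : the number of steps among the first `len` steps of `T` adding a box
on the diagonal `k`. -/
def dAdd {n : ℕ} (T : UpDownTableau n) (len : ℕ) (k : ℤ) : ℤ :=
  (((Finset.Icc 1 len).filter fun t =>
    T.add t = true ∧ ((T.box t).2 : ℤ) - ((T.box t).1 : ℤ) = k).card : ℤ)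

/-- `d'_k` : the number of steps among the first `len` steps of `T` removing a box
on the diagonal `k`. -/
def dRem {n : ℕ} (T : UpDownTableau n) (len : ℕ) (k : ℤ) : ℤ :=
  (((Finset.Icc 1 len).filter fun t =>
    T.add t = false ∧ ((T.box t).2 : ℤ) - ((T.box t).1 : ℤ) = k).card : ℤ)

/-- `g_k = δ_{k0} + d_{k-1} + d_{k+1} - 2 d_k`. -/
def gAdd {n : ℕ} (T : UpDownTableau n) (len : ℕ) (k : ℤ) : ℤ :=
  (if k = 0 then 1 else 0) + dAdd T len (k-1) + dAdd T len (k+1) - 2 * dAdd T len k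

/-- `g'_k = d'_{k-1} + d'_{k+1} - 2 d'_k`. -/
def gRem {n : ℕ} (T : UpDownTableau n) (len : ℕ) (k : ℤ) : ℤ :=
  dRem T len (k-1) + dRem T len (k+1) - 2 * dRem T len k

/-- The diagonal `j - i` of the box of step `r`. -/
def diagOf {n : ℕ} (T : UpDownTableau n) (r : ℕ) : ℤ :=
  ((T.box r).2 : ℤ) - ((T.box r).1 : ℤ)

/-- The exponent `p_r` of an updown tableau: `p_r = 1 - g_{k_r}` if a box is added on the
diagonal `k_r` at step `r`, and `p_r = 1 - g'_{k_r}` if a box is removed, where `g, g'`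
are computed from the first `r - 1` steps. -/
def pExp {n : ℕ} (T : UpDownTableau n) (r : ℕ) : ℤ :=
  1 - (if T.add r then gAdd T (r-1) (diagOf T r) else gRem T (r-1) (diagOf T r))

/-- The factor `φ(U, T)` in the recursive definition of `f(T)`; the products over all
integers `k` are realized as products over `-r-1 ≤ k ≤ r+1`, which contains the support
of `g` and `g'` (all other factors are equal to 1). -/
def phiStep {n : ℕ} (T : UpDownTableau n) (r : ℕ) : F :=
  if T.add r then
    (∏ k ∈ (Finset.Icc (-(r:ℤ)-1) ((r:ℤ)+1)).erase (diagOf T r),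
      ((diagOf T r - k : ℤ) : F) ^ gAdd T (r-1) k) *
    ∏ k ∈ Finset.Icc (-(r:ℤ)-1) ((r:ℤ)+1),
      (((diagOf T r + k : ℤ) : F) + ωF - 1) ^ gRem T (r-1) k
  else
    (∏ k ∈ (Finset.Icc (-(r:ℤ)-1) ((r:ℤ)+1)).erase (diagOf T r),
      ((k - diagOf T r : ℤ) : F) ^ gRem T (r-1) k) *
    ∏ k ∈ Finset.Icc (-(r:ℤ)-1) ((r:ℤ)+1),
      ((1 : F) - ωF - ((diagOf T r + k : ℤ) : F)) ^ gAdd T (r-1) k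

/-- The scalar `f(T) ∈ ℂ(ω)`, defined recursively by `f(∅) = 1`, `f(T) = f(U) φ(U,T)`. -/
def fT {n : ℕ} (T : UpDownTableau n) : ℕ → F
  | 0 => 1
  | r + 1 => fT T r * phiStep T (r+1)

/-- The hook length of the box `b` in the Young diagram `μ`. -/
def hookLength (μ : YoungDiagram) (b : ℕ × ℕ) : ℕ :=
  (μ.cells.filter fun c => c.1 = b.1 ∧ b.2 < c.2).card +
  (μ.cells.filter fun c => c.2 = b.2 ∧ b.1 < c.1).card + 1

/-- The product of the hook lengths of all boxes of `μ`. -/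
def hookProd (μ : YoungDiagram) : ℕ :=
  ∏ b ∈ μ.cells, hookLength μ b

/-- Polynomials in the variables `u_1, u_2, …` over `F = ℂ(ω)`. -/
abbrev MvP : Type := MvPolynomial ℕ F

/-- The field `F(u_1, u_2, …)` of rational functions in the variables `u_r` over `ℂ(ω)`. -/
abbrev KK : Type := FractionRing MvP

/-- Substituting `u_r = c` into a polynomial in the `u`'s. -/
def substOne (r : ℕ) (c : F) : MvP →ₐ[F] MvP :=
  MvPolynomial.aeval fun t => if t = r then MvPolynomial.C c else MvPolynomial.X t

/-- The variable `u_r` as an element of `KK`. -/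
def uVar (r : ℕ) : KK := algebraMap MvP KK (MvPolynomial.X r)

/-- A constant (an element of `ℂ(ω)`) as an element of `KK`. -/
def cK (x : F) : KK := algebraMap MvP KK (MvPolynomial.C x)

/-- The element `ω` of `KK`. -/
def ωK : KK := cK ωF

/-- `RegK r c f v` : the rational function `f ∈ F(u_1, u_2, …)`, viewed as a rational
function of the variable `u_r`, is regular at `u_r = c`, with value `v` there. -/
def RegK (r : ℕ) (c : F) (f v : KK) : Prop :=
  ∃ p q : MvP, substOne r c q ≠ 0 ∧
    f = algebraMap MvP KK p / algebraMap MvP KK q ∧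
    v = algebraMap MvP KK (substOne r c p) / algebraMap MvP KK (substOne r c q)

/-- The subring of "constants": the subring generated by the `s_i`, `e_i` and the
scalars from `ℂ(ω)` (i.e. the copy of the Brauer algebra `B_n(ω)` inside `B_n(ω) ⊗ KK`). -/
def constSubK [Algebra KK A] (s e : ℕ → A) : Subring A :=
  Subring.closure (Set.range s ∪ Set.range e ∪ Set.range fun x : F => algebraMap KK A (cK x))

/-- `RegStep s e r c a v` : the element `a` of `B ⊗ F(u_1,…,u_n)`, viewed as a rational
function of `u_r`, is regular at `u_r = c` with value `v`: it can be written as a finite sum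
`a = ∑ f_i • b_i` with constant `b_i` and coordinates `f_i` regular at `u_r = c` (denominators
not vanishing at `u_r = c`), whose values at `u_r = c` give `v = ∑ f_i(c) • b_i`. -/
def RegStep [Algebra KK A] (s e : ℕ → A) (r : ℕ) (c : F) (a v : A) : Prop :=
  ∃ (m : ℕ) (f g : Fin m → KK) (b : Fin m → A),
    (∀ i, RegK r c (f i) (g i)) ∧ (∀ i, b i ∈ constSubK s e) ∧
    a = ∑ i, f i • b i ∧ v = ∑ i, g i • b i

end BrauerFusion

/-!
Every step of `T` changes the size of the shape by one, so `|λ| = n` forces every step to add a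
box: `T` is a standard tableau, `d'_k = 0`, and `d_k` counts the boxes of the current shape on the
diagonal `k`. For a shape with at most `m` rows,
`g_k = δ_{k,-m} + ∑_i (δ_{k, λ_i - i} - δ_{k, λ_i - i - 1})`. Hence `g_c = 1` at the content `c`
of an addable box, which gives `p_r = 0`, and if the box is added in row `i` then
`φ = (β_i + 1) ∏_{i' ≠ i} (β_i - β_{i'}) / (β_i + 1 - β_{i'})` in terms of the β-numbers
`β_i = λ_i + m - 1 - i`. Adding the box raises `β_i` by one, so by Frobenius' form
`H(λ) ∏_{i < i'} (β_i - β_{i'}) = ∏_i β_i!` of the hook length formula this is exactly the ratio of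
the hook products. Frobenius' formula holds row by row: the hook lengths of row `i` and the
differences `β_i - β_{i'}`, `i < i'`, partition `{1, …, β_i}`.
-/

namespace YoungDiagram

theorem colLen_le_card (μ : YoungDiagram) (j : ℕ) : μ.colLen j ≤ μ.card := by
  rw [colLen_eq_card]
  exact Finset.card_le_card (Finset.filter_subset _ _)

theorem rowLen_le_card (μ : YoungDiagram) (i : ℕ) : μ.rowLen i ≤ μ.card := by
  rw [rowLen_eq_card]
  exact Finset.card_le_card (Finset.filter_subset _ _)

theorem rowLen_eq_zero_of_colLen_le {μ : YoungDiagram} {i : ℕ} (h : μ.colLen 0 ≤ i) :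
    μ.rowLen i = 0 := by
  by_contra hne
  have : (i, 0) ∈ μ := mem_iff_lt_rowLen.2 (Nat.pos_of_ne_zero hne)
  exact absurd (mem_iff_lt_colLen.1 this) (not_lt.2 h)

theorem mem_cells_iff_mem_range_of_colLen_le {μ : YoungDiagram} {m : ℕ} (hm : μ.colLen 0 ≤ m)
    (b : ℕ × ℕ) : b ∈ μ.cells ↔ b.1 ∈ Finset.range m ∧ b.2 ∈ Finset.range (μ.rowLen b.1) := by
  rw [mem_cells, ← Prod.mk.eta (p := b), mem_iff_lt_rowLen, Finset.mem_range, Finset.mem_range]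
  refine ⟨fun h => ⟨?_, h⟩, And.right⟩
  by_contra hb
  rw [rowLen_eq_zero_of_colLen_le (by omega)] at h
  omega

theorem card_of_cells_eq_insert {μ ν : YoungDiagram} {b : ℕ × ℕ} (hb : b ∉ μ)
    (hν : ν.cells = insert b μ.cells) : ν.card = μ.card + 1 := by
  change ν.cells.card = μ.cells.card + 1
  rw [hν, Finset.card_insert_of_notMem (by rwa [mem_cells])]

theorem rowLen_of_cells_eq_insert {μ ν : YoungDiagram} {i j : ℕ} (hb : (i, j) ∉ μ)
    (hν : ν.cells = insert (i, j) μ.cells) :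
    μ.rowLen i = j ∧ ν.rowLen = Function.update μ.rowLen i (j + 1) := by
  have hmem : ∀ a b, b < ν.rowLen a ↔ (a, b) = (i, j) ∨ b < μ.rowLen a := fun a b => by
    rw [← mem_iff_lt_rowLen, ← mem_iff_lt_rowLen, ← mem_cells, hν, Finset.mem_insert, mem_cells]
  have hμi : μ.rowLen i = j := by
    have hle : μ.rowLen i ≤ j := not_lt.1 (mt mem_iff_lt_rowLen.2 hb)
    have hj : j < ν.rowLen i := (hmem i j).2 (Or.inl rfl)
    by_contra hne
    have := (hmem i (μ.rowLen i)).1 (by omega)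
    simp only [Prod.mk.injEq, true_and, lt_irrefl, or_false] at this
    exact hne this
  refine ⟨hμi, funext fun a => eq_of_forall_lt_iff fun b => ?_⟩
  rw [hmem]
  rcases eq_or_ne a i with rfl | ha
  · simp only [Function.update_self, Prod.mk.injEq, true_and, hμi]
    omega
  · simp [ha]

end YoungDiagram

namespace Finset

variable {ι G₀ : Type*} [CommGroupWithZero G₀] {S : Finset ι} {x : ι → G₀}

theorem prod_zpow_add (hx : ∀ k ∈ S, x k ≠ 0) (f g : ι → ℤ) :
    ∏ k ∈ S, x k ^ (f k + g k) = (∏ k ∈ S, x k ^ f k) * ∏ k ∈ S, x k ^ g k := by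
  rw [← prod_mul_distrib]
  exact prod_congr rfl fun k hk => zpow_add₀ (hx k hk) _ _

theorem prod_zpow_sub (hx : ∀ k ∈ S, x k ≠ 0) (f g : ι → ℤ) :
    ∏ k ∈ S, x k ^ (f k - g k) = (∏ k ∈ S, x k ^ f k) / ∏ k ∈ S, x k ^ g k := by
  rw [← prod_div_distrib]
  exact prod_congr rfl fun k hk => zpow_sub₀ (hx k hk) _ _

theorem prod_zpow_sum (hx : ∀ k ∈ S, x k ≠ 0) {κ : Type*} (T : Finset κ) (f : κ → ι → ℤ) :
    ∏ k ∈ S, x k ^ (∑ t ∈ T, f t k) = ∏ t ∈ T, ∏ k ∈ S, x k ^ f t k := by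
  classical
  induction T using Finset.induction with
  | empty => simp
  | insert t T ht ih =>
    simp only [sum_insert ht, prod_insert ht, prod_zpow_add hx, ih]

theorem prod_zpow_ite_eq [DecidableEq ι] (a : ι) :
    ∏ k ∈ S, x k ^ (if k = a then (1 : ℤ) else 0) = if a ∈ S then x a else 1 := by
  rw [← prod_ite_eq' S a x]
  exact prod_congr rfl fun k _ => by split_ifs <;> simp

end Finset

namespace BrauerFusion

open YoungDiagram Finset

theorem hookLength_add_eq_rowLen_add_colLen (μ : YoungDiagram) {i j : ℕ} (h : (i, j) ∈ μ) :
    hookLength μ (i, j) + i + j + 1 = μ.rowLen i + μ.colLen j := by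
  have harm : μ.cells.filter (fun c => c.1 = i ∧ j < c.2) = {i} ×ˢ Ioo j (μ.rowLen i) := by
    ext ⟨a, b⟩
    simp only [mem_filter, mem_cells, mem_product, mem_singleton,
      mem_Ioo]
    constructor
    · rintro ⟨hab, rfl, hjb⟩
      exact ⟨rfl, hjb, mem_iff_lt_rowLen.1 hab⟩
    · rintro ⟨rfl, hjb, hb⟩
      exact ⟨mem_iff_lt_rowLen.2 hb, rfl, hjb⟩
  have hleg : μ.cells.filter (fun c => c.2 = j ∧ i < c.1) = Ioo i (μ.colLen j) ×ˢ {j} := by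
    ext ⟨a, b⟩
    simp only [mem_filter, mem_cells, mem_product, mem_singleton,
      mem_Ioo]
    constructor
    · rintro ⟨hab, rfl, hia⟩
      exact ⟨⟨hia, mem_iff_lt_colLen.1 hab⟩, rfl⟩
    · rintro ⟨⟨hia, ha⟩, rfl⟩
      exact ⟨mem_iff_lt_colLen.2 ha, rfl, hia⟩
  have hj := mem_iff_lt_rowLen.1 h
  have hi := mem_iff_lt_colLen.1 h
  simp only [hookLength, harm, hleg, card_product, card_singleton, Nat.card_Ioo]
  omega

/-- The β-numbers `λ_i + m - 1 - i`, `i < m`, of a diagram with at most `m` rows; for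
`m = μ.colLen 0` they are the hook lengths of the first column. -/
def betaNum (μ : YoungDiagram) (m i : ℕ) : ℕ :=
  μ.rowLen i + (m - 1 - i)

theorem betaNum_strictAntiOn (μ : YoungDiagram) (m : ℕ) :
    StrictAntiOn (betaNum μ m) (Set.Iio m) := fun a ha b hb hab => by
  have := μ.rowLen_anti a b hab.le
  simp only [Set.mem_Iio] at ha hb
  unfold betaNum
  omega

/-- The hook lengths of row `i` and the differences `β_i - β_{i'}`, `i < i' < m`, together
fill `{1, …, β_i}` without overlap. -/
theorem prod_hookLength_row_mul_prod_betaNum_sub {μ : YoungDiagram} {m i : ℕ}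
    (hm : μ.colLen 0 ≤ m) (hi : i < m) :
    (∏ j ∈ range (μ.rowLen i), hookLength μ (i, j)) *
      ∏ i' ∈ Ioo i m, (betaNum μ m i - betaNum μ m i') = (betaNum μ m i).factorial := by
  have hcol : ∀ j, μ.colLen j ≤ m := fun j => (μ.colLen_anti 0 j j.zero_le).trans hm
  have hhook : ∀ j < μ.rowLen i, hookLength μ (i, j) + i + j + 1 = μ.rowLen i + μ.colLen j :=
    fun j hj => hookLength_add_eq_rowLen_add_colLen μ (mem_iff_lt_rowLen.2 hj)
  have hcolpos : ∀ j < μ.rowLen i, i < μ.colLen j :=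
    fun j hj => mem_iff_lt_colLen.1 (mem_iff_lt_rowLen.2 hj)
  have hβ : ∀ i' ∈ Ioo i m, betaNum μ m i' < betaNum μ m i := fun i' hi' => by
    rw [mem_Ioo] at hi'
    exact betaNum_strictAntiOn μ m (Set.mem_Iio.2 hi) (Set.mem_Iio.2 hi'.2) hi'.1
  set A := (range (μ.rowLen i)).image fun j => hookLength μ (i, j)
  set B := (Ioo i m).image fun i' => betaNum μ m i - betaNum μ m i'
  have hAinj : Set.InjOn (fun j => hookLength μ (i, j)) (range (μ.rowLen i)) := by
    intro a ha b hb hab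
    simp only [coe_range, Set.mem_Iio] at ha hb hab
    have := hhook a ha
    have := hhook b hb
    rcases lt_trichotomy a b with h | h | h
    · have := μ.colLen_anti a b h.le; omega
    · exact h
    · have := μ.colLen_anti b a h.le; omega
  have hBinj : Set.InjOn (fun i' => betaNum μ m i - betaNum μ m i') (Ioo i m) := by
    intro a ha b hb hab
    have := hβ a ha
    have := hβ b hb
    rw [mem_coe, mem_Ioo] at ha hb
    exact (betaNum_strictAntiOn μ m).injOn (Set.mem_Iio.2 ha.2) (Set.mem_Iio.2 hb.2)
      (by simp only at hab; omega)
  -- `h(i,j) = β_i - β_{i'}` would say `colLen j - 1 - j = i' - λ_{i'}`, impossible on either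
  -- side of the cell `(i', j)`.
  have hdisj : Disjoint A B := by
    rw [disjoint_left]
    simp only [A, B, mem_image, mem_range, mem_Ioo]
    rintro _ ⟨j, hj, rfl⟩ ⟨i', ⟨hii', hi'm⟩, heq⟩
    have := hhook j hj
    have := hβ i' (mem_Ioo.2 ⟨hii', hi'm⟩)
    simp only [betaNum] at heq this
    by_cases hji' : j < μ.rowLen i'
    · have := mem_iff_lt_colLen.1 (mem_iff_lt_rowLen.2 hji')
      omega
    · have := mem_iff_lt_colLen.not.1 (mt mem_iff_lt_rowLen.1 hji')
      omega
  have hsub : A ∪ B ⊆ Ico 1 (betaNum μ m i + 1) := by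
    intro x hx
    simp only [A, B, mem_union, mem_image, mem_range, mem_Ioo,
      mem_Ico] at hx ⊢
    rcases hx with ⟨j, hj, rfl⟩ | ⟨i', hi', rfl⟩
    · have := hhook j hj
      have := hcol j
      have := hcolpos j hj
      simp only [betaNum]
      omega
    · have := hβ i' (mem_Ioo.2 hi')
      omega
  have hcard : (Ico 1 (betaNum μ m i + 1)).card ≤ (A ∪ B).card := by
    rw [card_union_of_disjoint hdisj, card_image_of_injOn hAinj,
      card_image_of_injOn hBinj, Nat.card_Ico, card_range, Nat.card_Ioo]
    simp only [betaNum]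
    omega
  rw [← prod_Ico_id_eq_factorial, ← eq_of_subset_of_card_le hsub hcard,
    prod_union hdisj, prod_image hAinj, prod_image hBinj]

theorem hookProd_eq_prod_rows {μ : YoungDiagram} {m : ℕ} (hm : μ.colLen 0 ≤ m) :
    hookProd μ = ∏ i ∈ range m, ∏ j ∈ range (μ.rowLen i), hookLength μ (i, j) :=
  prod_finset_product _ _ _ (mem_cells_iff_mem_range_of_colLen_le hm)

def prodPairDiff {R : Type*} [CommRing R] (m : ℕ) (b : ℕ → R) : R :=
  ∏ i ∈ range m, ∏ i' ∈ Ioo i m, (b i - b i')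

/-- Frobenius' form of the hook length formula. -/
theorem hookProd_mul_prodPairDiff {R : Type*} [CommRing R] {μ : YoungDiagram} {m : ℕ}
    (hm : μ.colLen 0 ≤ m) :
    (hookProd μ : R) * prodPairDiff m (fun i => (betaNum μ m i : R)) =
      ∏ i ∈ range m, ((betaNum μ m i).factorial : R) := by
  have hrows : ∀ i ∈ range m, (∏ j ∈ range (μ.rowLen i), hookLength μ (i, j)) *
      ∏ i' ∈ Ioo i m, (betaNum μ m i - betaNum μ m i') = (betaNum μ m i).factorial :=
    fun i hi => prod_hookLength_row_mul_prod_betaNum_sub hm (mem_range.1 hi)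
  have hcast : ∀ i ∈ range m, ∀ i' ∈ Ioo i m,
      ((betaNum μ m i - betaNum μ m i' : ℕ) : R) = (betaNum μ m i : R) - betaNum μ m i' := by
    intro i hi i' hi'
    rw [mem_range] at hi
    rw [mem_Ioo] at hi'
    exact Nat.cast_sub (betaNum_strictAntiOn μ m hi (Set.mem_Iio.2 hi'.2) hi'.1).le
  rw [prodPairDiff, hookProd_eq_prod_rows hm, Nat.cast_prod, ← prod_mul_distrib]
  refine prod_congr rfl fun i hi => ?_
  rw [← prod_congr rfl (hcast i hi), ← Nat.cast_prod, ← Nat.cast_mul, hrows i hi]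

theorem prodPairDiff_succ {R : Type*} [CommRing R] (m : ℕ) (b : ℕ → R) :
    prodPairDiff (m + 1) b = prodPairDiff m b * ∏ i ∈ range m, (b i - b m) := by
  have hIoo : ∀ i ∈ range m, Ioo i (m + 1) = insert m (Ioo i m) := by
    intro i hi
    rw [mem_range] at hi
    ext x
    simp only [mem_Ioo, mem_insert]
    omega
  have hlast : Ioo m (m + 1) = ∅ := by
    ext x
    simp only [mem_Ioo, notMem_empty, iff_false]
    omega
  rw [prodPairDiff, prod_range_succ, hlast, prod_empty, mul_one,
    prod_congr rfl fun i hi => by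
      rw [hIoo i hi, prod_insert (by simp), mul_comm],
    prod_mul_distrib, prodPairDiff]

theorem prodPairDiff_update {R : Type*} [CommRing R] (b : ℕ → R) (v : R) {i m : ℕ}
    (hi : i < m) :
    prodPairDiff m (Function.update b i v) * ∏ i' ∈ (range m).erase i, (b i - b i') =
      prodPairDiff m b * ∏ i' ∈ (range m).erase i, (v - b i') := by
  induction m, hi using Nat.le_induction with
  | base =>
    have hlow : prodPairDiff i (Function.update b i v) = prodPairDiff i b :=
      prod_congr rfl fun a ha => prod_congr rfl fun a' ha' => by
        rw [mem_range] at ha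
        rw [mem_Ioo] at ha'
        rw [Function.update_of_ne (by omega), Function.update_of_ne (by omega)]
    have hcol : ∏ a ∈ range i, (Function.update b i v a - Function.update b i v i) =
        ∏ a ∈ range i, (b a - v) :=
      prod_congr rfl fun a ha => by
        rw [Function.update_self, Function.update_of_ne (mem_range.1 ha).ne]
    rw [range_add_one, erase_insert notMem_range_self, prodPairDiff_succ,
      prodPairDiff_succ, hlow, hcol, mul_assoc, mul_assoc, ← prod_mul_distrib,
      ← prod_mul_distrib]
    congr 1
    exact prod_congr rfl fun _ _ => by ring
  | succ m him ih =>
    have hrow : ∀ c : ℕ → R, c m = b m → ∏ a ∈ range m, (c a - c m) =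
        (∏ a ∈ (range m).erase i, (c a - b m)) * (c i - b m) := fun c hc => by
      rw [hc, prod_erase_mul _ _ (mem_range.2 him)]
    have herase : (range (m + 1)).erase i = insert m ((range m).erase i) := by
      rw [range_add_one, erase_insert_of_ne (by omega)]
    have hnot : m ∉ (range m).erase i := fun h =>
      notMem_range_self (mem_of_mem_erase h)
    have hoff : ∏ a ∈ (range m).erase i, (Function.update b i v a - b m) =
        ∏ a ∈ (range m).erase i, (b a - b m) :=
      prod_congr rfl fun a ha => by rw [Function.update_of_ne (ne_of_mem_erase ha)]
    rw [prodPairDiff_succ, prodPairDiff_succ, hrow _ (Function.update_of_ne (by omega) _ _),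
      hrow _ rfl, hoff, Function.update_self, herase, prod_insert hnot,
      prod_insert hnot]
    linear_combination (b i - b m) * (v - b m) * (∏ a ∈ (range m).erase i, (b a - b m)) * ih

def diagCount (μ : YoungDiagram) (k : ℤ) : ℤ :=
  ((μ.cells.filter fun b => (b.2 : ℤ) - (b.1 : ℤ) = k).card : ℤ)

def gShape (μ : YoungDiagram) (k : ℤ) : ℤ :=
  (if k = 0 then 1 else 0) + diagCount μ (k - 1) + diagCount μ (k + 1) - 2 * diagCount μ k

theorem diagCount_eq_sum {μ : YoungDiagram} {m : ℕ} (hm : μ.colLen 0 ≤ m) (k : ℤ) :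
    diagCount μ k = ∑ i ∈ range m,
      if -(i : ℤ) ≤ k ∧ k < (μ.rowLen i : ℤ) - i then 1 else 0 := by
  rw [diagCount, card_filter, Nat.cast_sum,
    sum_finset_product _ (range m) (fun i => range (μ.rowLen i))
      (mem_cells_iff_mem_range_of_colLen_le hm)]
  refine sum_congr rfl fun i _ => ?_
  by_cases hk : 0 ≤ k + i
  · have hj : ∀ j : ℕ, ((j : ℤ) - i = k) ↔ (k + i).toNat = j := fun j => by omega
    simp only [hj, Nat.cast_ite, Nat.cast_one, Nat.cast_zero, sum_ite_eq,
      mem_range]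
    congr 1
    exact propext (by omega)
  · rw [if_neg (by omega)]
    exact sum_eq_zero fun j _ => by rw [if_neg (by omega), Nat.cast_zero]

/-- Summed over the rows, the second differences of the indicators of the contents
`-i, …, λ_i - i - 1` of the rows `i` telescope. -/
theorem gShape_eq_sum {μ : YoungDiagram} {m : ℕ} (hm : μ.colLen 0 ≤ m) (k : ℤ) :
    gShape μ k = (if k = -(m : ℤ) then 1 else 0) + ∑ i ∈ range m,
      ((if k = (μ.rowLen i : ℤ) - i then 1 else 0) -
        (if k = (μ.rowLen i : ℤ) - i - 1 then 1 else 0)) := by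
  have hrow : ∀ i ∈ range m,
      ((if -(i : ℤ) ≤ k - 1 ∧ k - 1 < (μ.rowLen i : ℤ) - i then 1 else 0) +
        (if -(i : ℤ) ≤ k + 1 ∧ k + 1 < (μ.rowLen i : ℤ) - i then 1 else 0) -
        2 * (if -(i : ℤ) ≤ k ∧ k < (μ.rowLen i : ℤ) - i then 1 else 0) : ℤ) =
      ((if k = -((i + 1 : ℕ) : ℤ) then 1 else 0) - (if k = -(i : ℤ) then 1 else 0)) +
        ((if k = (μ.rowLen i : ℤ) - i then 1 else 0) -
          (if k = (μ.rowLen i : ℤ) - i - 1 then 1 else 0)) := fun i _ => by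
    push_cast
    split_ifs <;> omega
  have hsum : gShape μ k = (if k = 0 then 1 else 0) + ∑ i ∈ range m,
      ((if -(i : ℤ) ≤ k - 1 ∧ k - 1 < (μ.rowLen i : ℤ) - i then 1 else 0) +
        (if -(i : ℤ) ≤ k + 1 ∧ k + 1 < (μ.rowLen i : ℤ) - i then 1 else 0) -
        2 * (if -(i : ℤ) ≤ k ∧ k < (μ.rowLen i : ℤ) - i then 1 else 0) : ℤ) := by
    rw [gShape, diagCount_eq_sum hm, diagCount_eq_sum hm, diagCount_eq_sum hm,
      sum_sub_distrib, sum_add_distrib, mul_sum]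
    ring
  rw [hsum, sum_congr rfl hrow, sum_add_distrib,
    sum_range_sub (fun i => if k = -(i : ℤ) then (1 : ℤ) else 0)]
  simp only [Nat.cast_zero, neg_zero]
  ring

theorem rowContent_ne_of_cells_eq_insert {μ ν : YoungDiagram} {i j : ℕ} (hb : (i, j) ∉ μ)
    (hν : ν.cells = insert (i, j) μ.cells) (i' : ℕ) :
    (i' ≠ i → (μ.rowLen i' : ℤ) - i' ≠ (j : ℤ) - i) ∧
      (μ.rowLen i' : ℤ) - i' - 1 ≠ (j : ℤ) - i := by
  obtain ⟨hμi, hνrow⟩ := rowLen_of_cells_eq_insert hb hν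
  rcases lt_trichotomy i' i with h | rfl | h
  · have := ν.rowLen_anti i' i h.le
    rw [hνrow, Function.update_self, Function.update_of_ne h.ne] at this
    omega
  · omega
  · have := μ.rowLen_anti i i' h.le
    omega

theorem lt_card_add_one_of_cells_eq_insert {μ ν : YoungDiagram} {i j : ℕ} (hb : (i, j) ∉ μ)
    (hν : ν.cells = insert (i, j) μ.cells) : i < μ.card + 1 := by
  have hi0 : (i, 0) ∈ ν :=
    ν.up_left_mem le_rfl j.zero_le (by rw [← mem_cells, hν]; exact mem_insert_self _ _)
  rw [← card_of_cells_eq_insert hb hν]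
  exact (mem_iff_lt_colLen.1 hi0).trans_le (colLen_le_card ν 0)

theorem gShape_eq_one_of_cells_eq_insert {μ ν : YoungDiagram} {i j : ℕ} (hb : (i, j) ∉ μ)
    (hν : ν.cells = insert (i, j) μ.cells) : gShape μ ((j : ℤ) - i) = 1 := by
  have hμi := (rowLen_of_cells_eq_insert hb hν).1
  have hne := rowContent_ne_of_cells_eq_insert hb hν
  rw [gShape_eq_sum (m := μ.colLen 0 + i + 1) (by omega), if_neg (by omega), sum_eq_single i]
  · rw [if_pos (by rw [hμi]), if_neg (hne i).2.symm]
    norm_num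
  · intro i' _ hi'
    rw [if_neg ((hne i').1 hi').symm, if_neg (hne i').2.symm, sub_zero]
  · intro h
    exact absurd (mem_range.2 (by omega)) h

theorem prod_zpow_gShape_eq_of_cells_eq_insert {K : Type*} [Field K] [CharZero K]
    {μ ν : YoungDiagram} {i j : ℕ} (hb : (i, j) ∉ μ) (hν : ν.cells = insert (i, j) μ.cells)
    {I : Finset ℤ} (hI : Icc (-(μ.card : ℤ) - 1) μ.card ⊆ I) :
    ∏ k ∈ I.erase ((j : ℤ) - i), (((j : ℤ) - i - k : ℤ) : K) ^ gShape μ k =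
      ((betaNum μ (μ.card + 1) i : K) + 1) *
        ∏ i' ∈ (range (μ.card + 1)).erase i,
          (((betaNum μ (μ.card + 1) i : K) - betaNum μ (μ.card + 1) i') /
            ((betaNum μ (μ.card + 1) i : K) + 1 - betaNum μ (μ.card + 1) i')) := by
  set m := μ.card + 1
  set c : ℤ := (j : ℤ) - i
  set x : ℤ → K := fun k => ((c - k : ℤ) : K)
  have hμi := (rowLen_of_cells_eq_insert hb hν).1
  have hne := rowContent_ne_of_cells_eq_insert hb hν
  have him : i < m := lt_card_add_one_of_cells_eq_insert hb hν
  have hrow : ∀ i', μ.rowLen i' ≤ μ.card := μ.rowLen_le_card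
  have hx : ∀ k ∈ I.erase c, x k ≠ 0 := fun k hk => by
    have := ne_of_mem_erase hk
    simp only [x, Int.cast_ne_zero]
    omega
  have hmem : ∀ a : ℤ, a ≠ c → -(m : ℤ) ≤ a → a ≤ μ.card → a ∈ I.erase c := fun a h h1 h2 =>
    mem_erase.2 ⟨h, hI (mem_Icc.2 ⟨by omega, h2⟩)⟩
  have hβ : ∀ i' < m, (betaNum μ m i : K) - betaNum μ m i' = x ((μ.rowLen i' : ℤ) - i') ∧
      (betaNum μ m i : K) + 1 - betaNum μ m i' = x ((μ.rowLen i' : ℤ) - i' - 1) := by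
    intro i' hi'
    have hz : (betaNum μ m i : ℤ) - betaNum μ m i' = c - ((μ.rowLen i' : ℤ) - i') := by
      simp only [betaNum, c]
      omega
    have hzK := congrArg (Int.cast : ℤ → K) hz
    push_cast at hzK
    simp only [x]
    push_cast
    constructor <;> linear_combination hzK
  have hcol : μ.colLen 0 ≤ m := (colLen_le_card μ 0).trans (Nat.le_succ _)
  simp only [gShape_eq_sum hcol]
  rw [prod_zpow_add hx, prod_zpow_sum hx, prod_zpow_ite_eq,
    if_pos (hmem _ (by omega) le_rfl (by omega)), ← prod_erase_mul _ _ (mem_range.2 him)]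
  simp only [prod_zpow_sub hx, prod_zpow_ite_eq]
  -- Row `i` contributes `δ_c - δ_{c-1}`; `c` is excluded from the product and `x (c - 1) = 1`.
  have hrow_i : (if (μ.rowLen i : ℤ) - i ∈ I.erase c then x ((μ.rowLen i : ℤ) - i) else 1) /
      (if (μ.rowLen i : ℤ) - i - 1 ∈ I.erase c then x ((μ.rowLen i : ℤ) - i - 1) else 1) = 1 := by
    have := hrow i
    rw [hμi, if_neg (notMem_erase c I), if_pos (hmem _ (by omega) (by omega) (by omega))]
    simp [x, c]
  rw [hrow_i, mul_one]
  congr 1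
  · have hz : (betaNum μ m i : ℤ) + 1 = c + m := by
      simp only [betaNum, c]
      omega
    have hzK := congrArg (Int.cast : ℤ → K) hz
    push_cast at hzK
    simp only [x]
    push_cast
    linear_combination -hzK
  · refine prod_congr rfl fun i' hi' => ?_
    obtain ⟨hi'i, hi'm⟩ := mem_erase.1 hi'
    rw [mem_range] at hi'm
    have := hrow i'
    rw [if_pos (hmem _ ((hne i').1 hi'i) (by omega) (by omega)),
      if_pos (hmem _ (hne i').2 (by omega) (by omega)), (hβ i' hi'm).1, (hβ i' hi'm).2]

theorem prodPairDiff_betaNum_ne_zero {K : Type*} [Field K] [CharZero K] (μ : YoungDiagram)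
    (m : ℕ) : prodPairDiff m (fun i => (betaNum μ m i : K)) ≠ 0 := by
  refine prod_ne_zero_iff.2 fun a ha => prod_ne_zero_iff.2 fun a' ha' => ?_
  rw [mem_Ioo] at ha'
  simp only [sub_ne_zero, ne_eq, Nat.cast_inj]
  exact (betaNum_strictAntiOn μ m (Set.mem_Iio.2 (mem_range.1 ha)) ha'.2 ha'.1).ne'

theorem betaNum_of_cells_eq_insert {μ ν : YoungDiagram} {i j : ℕ} (hb : (i, j) ∉ μ)
    (hν : ν.cells = insert (i, j) μ.cells) (m : ℕ) :
    betaNum ν m = Function.update (betaNum μ m) i (betaNum μ m i + 1) := by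
  obtain ⟨hμi, hνrow⟩ := rowLen_of_cells_eq_insert hb hν
  funext i'
  rcases eq_or_ne i' i with rfl | h
  · simp only [betaNum, hνrow, hμi, Function.update_self]
    omega
  · simp only [betaNum, hνrow, Function.update_of_ne h]

theorem hookProd_mul_prod_zpow_gShape {K : Type*} [Field K] [CharZero K]
    {μ ν : YoungDiagram} {i j : ℕ} (hb : (i, j) ∉ μ) (hν : ν.cells = insert (i, j) μ.cells)
    {I : Finset ℤ} (hI : Icc (-(μ.card : ℤ) - 1) μ.card ⊆ I) :
    (hookProd μ : K) * ∏ k ∈ I.erase ((j : ℤ) - i), (((j : ℤ) - i - k : ℤ) : K) ^ gShape μ k =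
      hookProd ν := by
  set m := μ.card + 1
  have him : i < m := lt_card_add_one_of_cells_eq_insert hb hν
  have hcard := card_of_cells_eq_insert hb hν
  have hβν := betaNum_of_cells_eq_insert hb hν m
  set b : ℕ → K := fun i' => (betaNum μ m i' : K)
  have hb' : (fun i' => (betaNum ν m i' : K)) = Function.update b i (b i + 1) := by
    funext i'
    rcases eq_or_ne i' i with rfl | h
    · simp [hβν, b]
    · simp [hβν, b, Function.update_of_ne h]
  have hfrobμ := hookProd_mul_prodPairDiff (R := K) ((colLen_le_card μ 0).trans μ.card.le_succ)
  have hfrobν := hookProd_mul_prodPairDiff (R := K) (μ := ν) (m := m)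
    (by have := colLen_le_card ν 0; omega)
  have hPν := prodPairDiff_betaNum_ne_zero (K := K) ν m
  rw [hb'] at hfrobν hPν
  have hfact : ∏ i' ∈ range m, ((betaNum ν m i').factorial : K) =
      (b i + 1) * ∏ i' ∈ range m, ((betaNum μ m i').factorial : K) := by
    rw [← prod_erase_mul _ _ (mem_range.2 him), ← prod_erase_mul _ _ (mem_range.2 him),
      prod_congr rfl fun i' hi' => by rw [hβν, Function.update_of_ne (ne_of_mem_erase hi')]]
    simp only [hβν, Function.update_self, Nat.factorial_succ, b]
    push_cast
    ring
  have hE : ∏ i' ∈ (range m).erase i, (b i + 1 - b i') ≠ 0 := by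
    refine prod_ne_zero_iff.2 fun i' hi' => ?_
    obtain ⟨hi'i, hi'm⟩ := mem_erase.1 hi'
    have := (betaNum_strictAntiOn ν m).injOn.ne (Set.mem_Iio.2 him)
      (Set.mem_Iio.2 (mem_range.1 hi'm)) hi'i.symm
    rw [hβν, Function.update_self, Function.update_of_ne hi'i] at this
    simp only [b, sub_ne_zero]
    exact_mod_cast this
  have hQ : (∏ i' ∈ (range m).erase i, (b i - b i') / (b i + 1 - b i')) *
      ∏ i' ∈ (range m).erase i, (b i + 1 - b i') = ∏ i' ∈ (range m).erase i, (b i - b i') := by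
    rw [prod_div_distrib, div_mul_cancel₀ _ hE]
  have hupd := prodPairDiff_update b (b i + 1) him
  rw [prod_zpow_gShape_eq_of_cells_eq_insert hb hν hI]
  -- After multiplying by `Δ(β') ∏_{i' ≠ i} (β_i + 1 - β_{i'})`, both sides reduce to
  -- `(β_i + 1) ∏ β_{i'}! ∏_{i' ≠ i} (β_i + 1 - β_{i'})`.
  refine mul_right_cancel₀ (mul_ne_zero hPν hE) ?_
  linear_combination (hookProd μ * (b i + 1) * prodPairDiff m (Function.update b i (b i + 1))) * hQ
    + (hookProd μ * (b i + 1) : K) * hupd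
    + ((b i + 1) * ∏ i' ∈ (range m).erase i, (b i + 1 - b i')) * hfrobμ
    - (∏ i' ∈ (range m).erase i, (b i + 1 - b i')) * hfact
    - (∏ i' ∈ (range m).erase i, (b i + 1 - b i')) * hfrobν

theorem diagCount_of_cells_eq_insert {μ ν : YoungDiagram} {b : ℕ × ℕ} (hb : b ∉ μ)
    (hν : ν.cells = insert b μ.cells) (k : ℤ) :
    diagCount ν k = diagCount μ k + if (b.2 : ℤ) - (b.1 : ℤ) = k then 1 else 0 := by
  have hb' : b ∉ μ.cells.filter fun c => (c.2 : ℤ) - (c.1 : ℤ) = k :=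
    fun h => hb ((mem_cells _).1 (mem_filter.1 h).1)
  rw [diagCount, diagCount, hν, filter_insert]
  split_ifs <;> simp [card_insert_of_notMem hb']

namespace UpDownTableau

variable {n : ℕ} (T : UpDownTableau n)

theorem card_shape_add_two_mul_card_removals {r : ℕ} (hr : r ≤ n) :
    ((T.shape r).card : ℤ) + 2 * ((Icc 1 r).filter fun t => T.add t = false).card = r := by
  induction r with
  | zero => simp [T.shape_zero, YoungDiagram.card]
  | succ r ih =>
    have hnot : r + 1 ∉ (Icc 1 r).filter fun t => T.add t = false := by simp
    rw [← insert_Icc_right_eq_Icc_add_one (by omega : 1 ≤ r + 1), filter_insert]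
    cases hstep : T.add (r + 1) with
    | true =>
      obtain ⟨hb, hν⟩ := T.step_add (r + 1) (by omega) hr hstep
      rw [card_of_cells_eq_insert hb hν]
      simp only [Bool.true_eq_false, if_false]
      push_cast
      linarith [ih (by omega)]
    | false =>
      obtain ⟨hb, hν⟩ := T.step_rem (r + 1) (by omega) hr hstep
      have := card_of_cells_eq_insert hb hν
      simp only [Nat.add_sub_cancel, if_true, card_insert_of_notMem hnot] at this ⊢
      push_cast
      linarith [ih (by omega)]

def IsStandard : Prop := ∀ r, 1 ≤ r → r ≤ n → T.add r = true

theorem isStandard_of_card_shape (hshape : (T.shape n).card = n) : T.IsStandard := by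
  intro r h1 h2
  have hcount := T.card_shape_add_two_mul_card_removals le_rfl
  rw [hshape] at hcount
  have hempty : (Icc 1 n).filter (fun t => T.add t = false) = ∅ :=
    card_eq_zero.1 (by omega)
  by_contra h
  have : r ∈ (Icc 1 n).filter (fun t => T.add t = false) :=
    mem_filter.2 ⟨mem_Icc.2 ⟨h1, h2⟩, by simpa using h⟩
  simp [hempty] at this

variable {T}

theorem dAdd_eq_diagCount (hT : T.IsStandard) {r : ℕ} (hr : r ≤ n) (k : ℤ) :
    dAdd T r k = diagCount (T.shape r) k := by
  induction r with
  | zero => simp [dAdd, diagCount, T.shape_zero]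
  | succ r ih =>
    obtain ⟨hb, hν⟩ := T.step_add (r + 1) (by omega) hr (hT _ (by omega) hr)
    have hnot : r + 1 ∉ (Icc 1 r).filter
        (fun t => T.add t = true ∧ ((T.box t).2 : ℤ) - ((T.box t).1 : ℤ) = k) := by simp
    rw [Nat.add_sub_cancel] at hb hν
    rw [diagCount_of_cells_eq_insert hb hν, ← ih (by omega), dAdd, dAdd,
      ← insert_Icc_right_eq_Icc_add_one (by omega : 1 ≤ r + 1), filter_insert]
    simp only [hT _ (by omega) hr, true_and]
    split_ifs <;> simp [card_insert_of_notMem hnot]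

theorem dRem_eq_zero (hT : T.IsStandard) {r : ℕ} (hr : r ≤ n) (k : ℤ) : dRem T r k = 0 := by
  rw [dRem, Nat.cast_eq_zero, card_eq_zero, filter_eq_empty_iff]
  intro t ht
  rw [mem_Icc] at ht
  simp [hT t ht.1 (ht.2.trans hr)]

theorem gAdd_eq_gShape (hT : T.IsStandard) {r : ℕ} (hr : r ≤ n) (k : ℤ) :
    gAdd T r k = gShape (T.shape r) k := by
  simp only [gAdd, gShape, dAdd_eq_diagCount hT hr]

theorem gRem_eq_zero (hT : T.IsStandard) {r : ℕ} (hr : r ≤ n) (k : ℤ) : gRem T r k = 0 := by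
  simp only [gRem, dRem_eq_zero hT hr, mul_zero, add_zero, sub_zero]

theorem pExp_eq_zero (hT : T.IsStandard) {r : ℕ} (h1 : 1 ≤ r) (h2 : r ≤ n) :
    pExp T r = 0 := by
  obtain ⟨hb, hν⟩ := T.step_add r h1 h2 (hT r h1 h2)
  rcases hbox : T.box r with ⟨i, j⟩
  rw [hbox] at hb hν
  rw [pExp, if_pos (hT r h1 h2), gAdd_eq_gShape hT (by omega), diagOf, hbox,
    gShape_eq_one_of_cells_eq_insert hb hν, sub_self]

theorem hookProd_mul_phiStep (hT : T.IsStandard) {r : ℕ} (h1 : 1 ≤ r) (h2 : r ≤ n) :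
    (hookProd (T.shape (r - 1)) : F) * phiStep T r = hookProd (T.shape r) := by
  obtain ⟨hb, hν⟩ := T.step_add r h1 h2 (hT r h1 h2)
  have hcard := T.card_shape_add_two_mul_card_removals (r := r - 1) (by omega)
  rcases hbox : T.box r with ⟨i, j⟩
  rw [hbox] at hb hν
  rw [phiStep, if_pos (hT r h1 h2)]
  simp only [gRem_eq_zero hT (by omega : r - 1 ≤ n), zpow_zero, prod_const_one, mul_one,
    gAdd_eq_gShape hT (by omega : r - 1 ≤ n), diagOf, hbox]
  exact hookProd_mul_prod_zpow_gShape hb hν (Icc_subset_Icc (by omega) (by omega))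

theorem fT_eq_hookProd (hT : T.IsStandard) {r : ℕ} (hr : r ≤ n) :
    fT T r = hookProd (T.shape r) := by
  induction r with
  | zero => simp [fT, hookProd, T.shape_zero]
  | succ r ih =>
    rw [fT, ih (by omega), ← hookProd_mul_phiStep hT (by omega) hr, Nat.add_sub_cancel]

end UpDownTableau

/-- **Proposition 3.1.** If `T = (Λ_1,…,Λ_n)` is an updown `λ`-tableau and `λ` is a
partition of `n`, then all exponents `p_1,…,p_n` of `T` are equal to zero, and `f(T)`
equals the product of the hook lengths of all boxes of `λ`. -/
theorem exponents_eq_zero_and_fT_eq_hookProd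
    (n : ℕ) (T : UpDownTableau n) (hshape : (T.shape n).card = n) :
    (∀ r, 1 ≤ r → r ≤ n → pExp T r = 0) ∧
    fT T n = (hookProd (T.shape n) : F) := by
  have hT := T.isStandard_of_card_shape hshape
  exact ⟨fun _ => UpDownTableau.pExp_eq_zero hT, UpDownTableau.fT_eq_hookProd hT le_rfl⟩

end BrauerFusion
end
end

section
/- Let u and v be independent indeterminates. For any indices 1 ≤ i < j < r ≤ n, the following identity holds in B_n(ω) ⊗_F F(u,v): (1 − e_{ir}/u)(1 − e_{jr}/v)(1 − s_{ij}/(u−v)) = (1 − s_{ij}/(u−v))(1 − e_{jr}/v)(1 − e_{ir}/u). -/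
/-!
Common definitions for the fusion procedure for the Brauer algebra
(Isaev–Molev, "Fusion procedure for the Brauer algebra").
-/

noncomputable section
open scoped BigOperators
open Classical

/-!
Write `S = s_{ij}`, `E = e_{ir}` and `E' = e_{jr}`. In the Brauer algebra `S² = 1`, `S E S = E'`
(the transposition `(i j)` conjugates `e_{ir}` to `e_{jr}`) and `E' S E' = E'`, which comes down to
`e_m s_{im} e_m = e_m`. These three relations alone give `E E' = E S`, `E' E = S E` and
`E S E = E`, so both sides expand to the same combination of `1, E, E', S, E S, S E`; the
coefficients of `E S` agree because `1/(uv) + 1/(u(u-v)) = 1/(v(u-v))`.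
-/

namespace BrauerFusion

theorem mul_mul_cancel_left_of_mul_self_eq_one {M : Type*} [Monoid M] {x : M} (h : x * x = 1)
    (y : M) : x * (x * y) = y := by
  rw [← mul_assoc, h, one_mul]

theorem yangBaxter_of_involution_conj {K A : Type*} [Field K] [Ring A] [Algebra K A]
    {S E E' : A} (hS : S * S = 1) (hconj : S * E * S = E') (hE' : E' * S * E' = E')
    {u v : K} (hu : u ≠ 0) (hv : v ≠ 0) (huv : u ≠ v) :
    (1 - u⁻¹ • E) * (1 - v⁻¹ • E') * (1 - (u - v)⁻¹ • S)
    = (1 - (u - v)⁻¹ • S) * (1 - v⁻¹ • E') * (1 - u⁻¹ • E) := by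
  subst hconj
  have hS' := mul_mul_cancel_left_of_mul_self_eq_one hS
  have hESE : E * S * E = E := by
    calc E * S * E = S * (S * E * S * S * (S * E * S)) * S := by
          simp only [mul_assoc, hS', hS, mul_one]
      _ = E := by rw [hE']; simp only [mul_assoc, hS', hS, mul_one]
  have hESE' : ∀ y, E * (S * (E * y)) = E * y := fun y => by
    rw [← mul_assoc, ← mul_assoc, hESE]
  simp only [mul_sub, sub_mul, mul_one, one_mul, smul_mul_assoc, mul_smul_comm, mul_assoc,
    hS, hS', hESE, hESE']
  match_scalars <;> field_simp <;> ring

section Transpositions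

variable {A : Type*} [Ring A] {s e : ℕ → A}

theorem sij_of_lt {i j : ℕ} (h : i + 1 < j) : sij s i j = s i * sij s (i+1) j * s i := by
  rw [sij, dif_pos h]

theorem sij_self_succ (i : ℕ) : sij s i (i+1) = s i := by
  rw [sij, dif_neg (lt_irrefl _)]

theorem eij_of_lt {i j : ℕ} (h : i + 1 < j) :
    eij s e i j = sij s i (j-1) * e (j-1) * sij s i (j-1) := by
  rw [eij, if_pos h]

theorem eij_self_succ (i : ℕ) : eij s e i (i+1) = e i := by
  rw [eij, if_neg (lt_irrefl _)]

variable {R : Type*} [CommRing R] [Algebra R A] {n : ℕ} {ω : R}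

theorem commute_s_sij (hB : IsBrauer n ω s e) {k a b : ℕ} (hk : 1 ≤ k) (hka : k + 1 < a)
    (hab : a < b) (hbn : b ≤ n) : Commute (s k) (sij s a b) := by
  have hsa : Commute (s k) (s a) := hB.ss_comm k a hk (by omega) hka
  rcases Nat.lt_or_ge (a + 1) b with hb | hb
  · rw [sij_of_lt hb]
    exact (hsa.mul_right (commute_s_sij hB hk (by omega) hb hbn)).mul_right hsa
  · obtain rfl : b = a + 1 := by omega
    rwa [sij_self_succ]
termination_by b - a

theorem commute_e_sij (hB : IsBrauer n ω s e) {m a b : ℕ} (ha : 1 ≤ a) (hab : a < b)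
    (hbm : b < m) (hmn : m + 1 ≤ n) : Commute (e m) (sij s a b) := by
  have hea : Commute (e m) (s a) := (hB.se_comm a m ha hmn (by omega)).symm
  rcases Nat.lt_or_ge (a + 1) b with hb | hb
  · rw [sij_of_lt hb]
    exact (hea.mul_right (commute_e_sij hB (by omega) hb hbm hmn)).mul_right hea
  · obtain rfl : b = a + 1 := by omega
    rwa [sij_self_succ]
termination_by b - a

theorem sij_mul_self (hB : IsBrauer n ω s e) {i j : ℕ} (hi : 1 ≤ i) (hij : i < j)
    (hjn : j ≤ n) : sij s i j * sij s i j = 1 := by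
  have hss := hB.ss i hi (by omega)
  rcases Nat.lt_or_ge (i + 1) j with hj | hj
  · have ih := mul_mul_cancel_left_of_mul_self_eq_one (sij_mul_self hB (by omega) hj hjn)
    rw [sij_of_lt hj]
    simp only [mul_assoc, mul_mul_cancel_left_of_mul_self_eq_one hss, ih, hss]
  · obtain rfl : j = i + 1 := by omega
    rwa [sij_self_succ]
termination_by j - i

theorem sij_eq_conj_pred (hB : IsBrauer n ω s e) {i j : ℕ} (hi : 1 ≤ i) (hij : i + 1 < j)
    (hjn : j ≤ n) : sij s i j = s (j-1) * sij s i (j-1) * s (j-1) := by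
  rcases Nat.lt_or_ge (i + 2) j with hj | hj
  · have hc : Commute (s i) (s (j-1)) := hB.ss_comm i (j-1) hi (by omega) (by omega)
    rw [sij_of_lt hij, sij_eq_conj_pred hB (by omega) (by omega) hjn,
      sij_of_lt (show i + 1 < j - 1 by omega)]
    simp only [mul_assoc, hc.left_comm, hc.eq]
  · obtain rfl : j = i + 2 := by omega
    rw [sij_of_lt hij, show i + 2 - 1 = i + 1 by omega, sij_self_succ, sij_self_succ]
    exact hB.braid i hi hjn
termination_by j - i

theorem s_mul_sij_mul_s (hB : IsBrauer n ω s e) {i m : ℕ} (hi : 1 ≤ i) (him : i + 1 < m)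
    (hmn : m ≤ n) : s i * sij s (i+1) m * s i = sij s (i+1) m * s i * sij s (i+1) m := by
  rcases Nat.lt_or_ge (i + 2) m with hm | hm
  · have hc : Commute (s i) (s (m-1)) := hB.ss_comm i (m-1) hi (by omega) (by omega)
    have hss := mul_mul_cancel_left_of_mul_self_eq_one (hB.ss (m-1) (by omega) (by omega))
    have ih := s_mul_sij_mul_s hB hi (show i + 1 < m - 1 by omega) (by omega)
    rw [sij_eq_conj_pred hB (by omega) hm hmn]
    calc s i * (s (m-1) * sij s (i+1) (m-1) * s (m-1)) * s i
        = s (m-1) * (s i * sij s (i+1) (m-1) * s i) * s (m-1) := by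
          simp only [mul_assoc, hc.left_comm, hc.eq]
      _ = s (m-1) * sij s (i+1) (m-1) * s (m-1) * s i *
            (s (m-1) * sij s (i+1) (m-1) * s (m-1)) := by
          rw [ih]; simp only [mul_assoc, hc.left_comm, hss]
  · obtain rfl : m = i + 2 := by omega
    rw [sij_self_succ]
    exact hB.braid i hi hmn
termination_by m - i

end Transpositions

section Conjugation

variable {R A : Type*} [CommRing R] [Ring A] [Algebra R A] {n : ℕ} {ω : R} {s e : ℕ → A}

theorem sij_mul_sij_mul_sij (hB : IsBrauer n ω s e) {i j m : ℕ} (hi : 1 ≤ i) (hij : i < j)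
    (hjm : j < m) (hmn : m ≤ n) : sij s i j * sij s i m * sij s i j = sij s j m := by
  have hss := hB.ss i hi (by omega)
  have hss' := mul_mul_cancel_left_of_mul_self_eq_one hss
  rw [sij_of_lt (show i + 1 < m by omega)]
  rcases Nat.lt_or_ge (i + 1) j with hj | hj
  · have hc : Commute (s i) (sij s j m) := commute_s_sij hB hi hj hjm hmn
    calc sij s i j * (s i * sij s (i+1) m * s i) * sij s i j
        = s i * (sij s (i+1) j * sij s (i+1) m * sij s (i+1) j) * s i := by
          rw [sij_of_lt hj]; simp only [mul_assoc, hss']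
      _ = sij s j m := by
          rw [sij_mul_sij_mul_sij hB (by omega) hj hjm hmn, hc.eq, mul_assoc, hss, mul_one]
  · obtain rfl : j = i + 1 := by omega
    rw [sij_self_succ]
    simp only [mul_assoc, hss', hss, mul_one]
termination_by j - i

theorem sij_mul_sij_mul_sij' (hB : IsBrauer n ω s e) {i j m : ℕ} (hi : 1 ≤ i) (hij : i < j)
    (hjm : j < m) (hmn : m ≤ n) : sij s j m * sij s i j * sij s j m = sij s i m := by
  rw [sij_of_lt (show i + 1 < m by omega)]
  rcases Nat.lt_or_ge (i + 1) j with hj | hj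
  · have hc : Commute (s i) (sij s j m) := commute_s_sij hB hi hj hjm hmn
    rw [sij_of_lt hj, ← sij_mul_sij_mul_sij' hB (by omega) hj hjm hmn]
    simp only [mul_assoc, hc.left_comm, hc.eq]
  · obtain rfl : j = i + 1 := by omega
    rw [sij_self_succ]
    exact (s_mul_sij_mul_s hB hi hjm hmn).symm
termination_by j - i

theorem e_mul_sij_mul_e (hB : IsBrauer n ω s e) {i m : ℕ} (hi : 1 ≤ i) (him : i < m)
    (hmn : m + 1 ≤ n) : e m * sij s i m * e m = e m := by
  rcases Nat.lt_or_ge (i + 1) m with hm | hm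
  · have hc : Commute (e m) (s i) := (hB.se_comm i m hi hmn hm).symm
    calc e m * sij s i m * e m = s i * (e m * sij s (i+1) m * e m) * s i := by
          rw [sij_of_lt hm]; simp only [mul_assoc, hc.left_comm, hc.eq]
      _ = e m := by
          rw [e_mul_sij_mul_e hB (by omega) hm hmn, ← hc.eq, mul_assoc, hB.ss i hi (by omega),
            mul_one]
  · obtain rfl : m = i + 1 := by omega
    calc e (i+1) * sij s i (i+1) * e (i+1) = e (i+1) * e i * s (i+1) * e (i+1) := by
          rw [sij_self_succ, hB.ees i hi hmn]
      _ = e (i+1) := by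
          rw [mul_assoc _ (s _), hB.se (i+1) (by omega) hmn, hB.eee₂ i hi hmn]
termination_by m - i

theorem sij_mul_eij_mul_sij (hB : IsBrauer n ω s e) {i j r : ℕ} (hi : 1 ≤ i) (hij : i < j)
    (hjr : j < r) (hrn : r ≤ n) : sij s i j * eij s e i r * sij s i j = eij s e j r := by
  have hss := mul_mul_cancel_left_of_mul_self_eq_one (sij_mul_self hB hi hij (by omega))
  rw [eij_of_lt (show i + 1 < r by omega)]
  rcases Nat.lt_or_ge (j + 1) r with hr | hr
  · have hc : Commute (e (r-1)) (sij s i j) := commute_e_sij hB hi hij (by omega) (by omega)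
    rw [eij_of_lt hr, ← sij_mul_sij_mul_sij hB hi hij (by omega) (by omega)]
    simp only [mul_assoc, hss, hc.left_comm]
  · obtain rfl : r = j + 1 := by omega
    rw [eij_self_succ, Nat.add_sub_cancel]
    simp only [mul_assoc, hss, sij_mul_self hB hi hij (by omega), mul_one]

theorem eij_mul_sij_mul_eij (hB : IsBrauer n ω s e) {i j r : ℕ} (hi : 1 ≤ i) (hij : i < j)
    (hjr : j < r) (hrn : r ≤ n) : eij s e j r * sij s i j * eij s e j r = eij s e j r := by
  rcases Nat.lt_or_ge (j + 1) r with hr | hr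
  · have hconj := sij_mul_sij_mul_sij' hB hi hij (show j < r - 1 by omega) (by omega)
    have he := e_mul_sij_mul_e hB hi (show i < r - 1 by omega) (by omega)
    calc eij s e j r * sij s i j * eij s e j r
        = sij s j (r-1) * (e (r-1) * (sij s j (r-1) * sij s i j * sij s j (r-1)) * e (r-1)) *
            sij s j (r-1) := by
          rw [eij_of_lt hr]; simp only [mul_assoc]
      _ = eij s e j r := by rw [hconj, he, eij_of_lt hr, mul_assoc]
  · obtain rfl : r = j + 1 := by omega
    rw [eij_self_succ]
    exact e_mul_sij_mul_e hB hi hij hrn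

end Conjugation

/-- **The identity (3.8).** For `1 ≤ i < j < r ≤ n`,
`(1 - e_{ir}/u)(1 - e_{jr}/v)(1 - s_{ij}/(u-v)) = (1 - s_{ij}/(u-v))(1 - e_{jr}/v)(1 - e_{ir}/u)`
in `B_n(ω) ⊗ F(u,v)`.  This is stated in any algebra over a field `K ⊇ ℂ(ω)` and for any
`u, v ∈ K` at which the denominators are nonzero (in particular for independent
indeterminates `u, v`). -/
theorem eir_ejr_sij_identity
    {K : Type*} [Field K] [Algebra F K] {A : Type*} [Ring A] [Algebra K A]
    (n i j r : ℕ) (hi : 1 ≤ i) (hij : i < j) (hjr : j < r) (hrn : r ≤ n)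
    (s e : ℕ → A) (hB : IsBrauer n (algebraMap F K ωF) s e)
    (u v : K) (hu : u ≠ 0) (hv : v ≠ 0) (huv : u ≠ v) :
    (1 - u⁻¹ • eij s e i r) * (1 - v⁻¹ • eij s e j r) * (1 - (u - v)⁻¹ • sij s i j)
    = (1 - (u - v)⁻¹ • sij s i j) * (1 - v⁻¹ • eij s e j r) * (1 - u⁻¹ • eij s e i r) :=
  yangBaxter_of_involution_conj (sij_mul_self hB hi hij (hjr.trans_le hrn).le)
    (sij_mul_eij_mul_sij hB hi hij hjr hrn) (eij_mul_sij_mul_eij hB hi hij hjr hrn) hu hv huv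

end BrauerFusion
end
end
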